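/- arXiv:hep-th/0507206 — 2 statements merged into one kernel-verified Lean document; each statement's English description precedes it below -/
import Mathlib

section
/- Let α be a smooth, proper, free action of ℝ^l on a manifold M, with quotient map π: M → M/ℝ^l, and let Δ_α = -∑_{j=1}^l X_j² be the Casimir operator of the action. Then for every f ∈ C_c^∞(M) and every k ∈ ℕ, sup_{p ∈ M} ∫_{ℝ^l} |Δ_α^k (α_y f)(p)| dy < ∞. -/
open MeasureTheory
open scoped Manifold

/-- The flat Laplacian `Δ g = -∑_j ∂²g/∂y_j²` on functions on `ℝ^l`. Via the identity
`Δ_α^k (α_y f)(p) = Δ^k (w ↦ f(α_{-w}(p)))(y)`, iterates of the Casimir operator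
`Δ_α = -∑ X_j²` of an `ℝ^l`-action applied to translates of `f` are expressed through
iterates of this flat Laplacian applied to the orbit map `w ↦ f(α_{-w}(p))`. -/
noncomputable def flatLaplacian (l : ℕ) (g : (Fin l → ℝ) → ℂ) : (Fin l → ℝ) → ℂ :=
  fun y => -∑ j : Fin l,
    fderiv ℝ (fun z => fderiv ℝ g z (Pi.single j 1)) y (Pi.single j 1)

section Aux

variable {l : ℕ}

lemma fderiv_comp_sub' {F : Type*} [NormedAddCommGroup F] [NormedSpace ℝ F]
    (g : (Fin l → ℝ) → F) (c y : Fin l → ℝ) :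
    fderiv ℝ (fun z => g (z - c)) y = fderiv ℝ g (y - c) := by
  by_cases hd : DifferentiableAt ℝ g (y - c)
  · have h1 : HasFDerivAt (fun z : Fin l → ℝ => z - c)
        (ContinuousLinearMap.id ℝ (Fin l → ℝ)) y := (hasFDerivAt_id y).sub_const c
    have h2 := (hd.hasFDerivAt.comp y h1).fderiv
    simpa [Function.comp_def] using h2
  · have hd2 : ¬ DifferentiableAt ℝ (fun z => g (z - c)) y := by
      intro h
      apply hd
      have h' : DifferentiableAt ℝ (fun z => g (z - c)) (y - c + c) := by
        rw [sub_add_cancel]; exact h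
      have h3 := DifferentiableAt.comp (y - c) h' (differentiableAt_id.add_const c)
      simpa [Function.comp_def, add_sub_cancel_right] using h3
    rw [fderiv_zero_of_not_differentiableAt hd, fderiv_zero_of_not_differentiableAt hd2]

lemma flatLaplacian_comp_sub (g : (Fin l → ℝ) → ℂ) (c : Fin l → ℝ) :
    flatLaplacian l (fun z => g (z - c)) = fun y => flatLaplacian l g (y - c) := by
  funext y
  unfold flatLaplacian
  congr 1
  apply Finset.sum_congr rfl
  intro j _
  have h1 : (fun z => fderiv ℝ (fun w => g (w - c)) z (Pi.single j 1))
      = fun z => (fun w => fderiv ℝ g w (Pi.single j 1)) (z - c) := by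
    funext z; rw [fderiv_comp_sub']
  rw [h1]
  exact congrArg (fun D => D (Pi.single j 1))
    (fderiv_comp_sub' (fun w => fderiv ℝ g w (Pi.single j 1)) c y)

lemma flatLaplacian_iterate_comp_sub (k : ℕ) (g : (Fin l → ℝ) → ℂ) (c : Fin l → ℝ) :
    (flatLaplacian l)^[k] (fun z => g (z - c)) = fun y => (flatLaplacian l)^[k] g (y - c) := by
  induction k generalizing g with
  | zero => simp
  | succ k ih =>
    rw [Function.iterate_succ_apply, Function.iterate_succ_apply,
      flatLaplacian_comp_sub, ih]

lemma flatLaplacian_eqOn_zero {U : Set (Fin l → ℝ)} (hU : IsOpen U)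
    {g : (Fin l → ℝ) → ℂ} (hg : ∀ y ∈ U, g y = 0) :
    ∀ y ∈ U, flatLaplacian l g y = 0 := by
  have hinner : ∀ y ∈ U, fderiv ℝ g y = 0 := by
    intro y hy
    have he : g =ᶠ[nhds y] (fun _ => (0 : ℂ)) :=
      Filter.eventuallyEq_of_mem (hU.mem_nhds hy) hg
    rw [he.fderiv_eq]
    exact fderiv_const_apply 0
  intro y hy
  unfold flatLaplacian
  have : ∀ j : Fin l,
      fderiv ℝ (fun z => fderiv ℝ g z (Pi.single j 1)) y (Pi.single j 1) = 0 := by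
    intro j
    have he : (fun z => fderiv ℝ g z (Pi.single j 1)) =ᶠ[nhds y] (fun _ => (0 : ℂ)) := by
      apply Filter.eventuallyEq_of_mem (hU.mem_nhds hy)
      intro z hz
      simp [hinner z hz]
    rw [he.fderiv_eq, fderiv_const_apply 0]
    rfl
  simp [this]

lemma flatLaplacian_iterate_eqOn_zero (k : ℕ) {U : Set (Fin l → ℝ)} (hU : IsOpen U)
    {g : (Fin l → ℝ) → ℂ} (hg : ∀ y ∈ U, g y = 0) :
    ∀ y ∈ U, (flatLaplacian l)^[k] g y = 0 := by
  induction k generalizing g with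
  | zero => exact hg
  | succ k ih =>
    intro y hy
    rw [Function.iterate_succ_apply]
    exact ih (flatLaplacian_eqOn_zero hU hg) y hy

end Aux

section Smooth

variable {E : Type*} [NormedAddCommGroup E] [NormedSpace ℝ E]
  {HM : Type*} [TopologicalSpace HM] {I : ModelWithCorners ℝ E HM}
  {M : Type*} [TopologicalSpace M] [ChartedSpace HM M] [IsManifold I (⊤ : ℕ∞) M]
  {l : ℕ}

noncomputable def dParam (l : ℕ) {M : Type*} (j : Fin l) (Ψ : (Fin l → ℝ) × M → ℂ) :
    (Fin l → ℝ) × M → ℂ :=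
  fun q => fderiv ℝ (fun w => Ψ (w, q.2)) q.1 (Pi.single j 1)

lemma contMDiff_dParam (j : Fin l) {Ψ : (Fin l → ℝ) × M → ℂ}
    (hΨ : ContMDiff (𝓘(ℝ, Fin l → ℝ).prod I) 𝓘(ℝ, ℂ) (⊤ : ℕ∞) Ψ) :
    ContMDiff (𝓘(ℝ, Fin l → ℝ).prod I) 𝓘(ℝ, ℂ) (⊤ : ℕ∞) (dParam l j Ψ) := by
  have hclm : ContMDiff (𝓘(ℝ, Fin l → ℝ).prod I) 𝓘(ℝ, (Fin l → ℝ) →L[ℝ] ℂ) (⊤ : ℕ∞)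
      (fun q : (Fin l → ℝ) × M => fderiv ℝ (fun w => Ψ (w, q.2)) q.1) := by
    intro q₀
    have hf : ContMDiffAt ((𝓘(ℝ, Fin l → ℝ).prod I).prod 𝓘(ℝ, Fin l → ℝ)) 𝓘(ℝ, ℂ) (⊤ : ℕ∞)
        (Function.uncurry (fun (q : (Fin l → ℝ) × M) (w : Fin l → ℝ) => Ψ (w, q.2)))
        (q₀, q₀.1) := by
      have : ContMDiff ((𝓘(ℝ, Fin l → ℝ).prod I).prod 𝓘(ℝ, Fin l → ℝ))
          (𝓘(ℝ, Fin l → ℝ).prod I) (⊤ : ℕ∞)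
          (fun x : ((Fin l → ℝ) × M) × (Fin l → ℝ) => (x.2, x.1.2)) :=
        contMDiff_snd.prodMk (contMDiff_snd.comp contMDiff_fst)
      exact (hΨ.comp this).contMDiffAt
    have h := ContMDiffAt.mfderiv (m := (⊤ : ℕ∞)) (n := (⊤ : ℕ∞))
        (fun (q : (Fin l → ℝ) × M) (w : Fin l → ℝ) => Ψ (w, q.2))
        (Prod.fst) hf contMDiffAt_fst (by simp)
    erw [inTangentCoordinates_model_space] at h
    have he : (fun q : (Fin l → ℝ) × M =>
        mfderiv 𝓘(ℝ, Fin l → ℝ) 𝓘(ℝ, ℂ) (fun w => Ψ (w, q.2)) q.1)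
        = fun q => fderiv ℝ (fun w => Ψ (w, q.2)) q.1 := by
      funext q; exact mfderiv_eq_fderiv
    rwa [he] at h
  exact hclm.clm_apply contMDiff_const

lemma contMDiff_lapParam {Ψ : (Fin l → ℝ) × M → ℂ}
    (hΨ : ContMDiff (𝓘(ℝ, Fin l → ℝ).prod I) 𝓘(ℝ, ℂ) (⊤ : ℕ∞) Ψ) :
    ContMDiff (𝓘(ℝ, Fin l → ℝ).prod I) 𝓘(ℝ, ℂ) (⊤ : ℕ∞)
      (fun q : (Fin l → ℝ) × M => flatLaplacian l (fun w => Ψ (w, q.2)) q.1) := by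
  have hrw : (fun q : (Fin l → ℝ) × M => flatLaplacian l (fun w => Ψ (w, q.2)) q.1)
      = fun q => -∑ j : Fin l, dParam l j (dParam l j Ψ) q := rfl
  rw [hrw]
  exact (contMDiff_finset_sum
    (fun j _ => contMDiff_dParam j (contMDiff_dParam j hΨ))).neg

lemma contMDiff_lapParam_iterate (k : ℕ) {Ψ : (Fin l → ℝ) × M → ℂ}
    (hΨ : ContMDiff (𝓘(ℝ, Fin l → ℝ).prod I) 𝓘(ℝ, ℂ) (⊤ : ℕ∞) Ψ) :
    ContMDiff (𝓘(ℝ, Fin l → ℝ).prod I) 𝓘(ℝ, ℂ) (⊤ : ℕ∞)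
      (fun q : (Fin l → ℝ) × M => (flatLaplacian l)^[k] (fun w => Ψ (w, q.2)) q.1) := by
  induction k generalizing Ψ with
  | zero => simpa using hΨ
  | succ k ih =>
    have h1 := contMDiff_lapParam hΨ
    have heq : (fun q : (Fin l → ℝ) × M =>
          (flatLaplacian l)^[k + 1] (fun w => Ψ (w, q.2)) q.1)
        = fun q => (flatLaplacian l)^[k]
            (fun w => (fun q' : (Fin l → ℝ) × M =>
              flatLaplacian l (fun w' => Ψ (w', q'.2)) q'.1) (w, q.2)) q.1 := by
      funext q
      rw [Function.iterate_succ_apply]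
    rw [heq]
    exact ih h1

end Smooth

/-- For a smooth, proper, free action `α` of `ℝ^l` on `M`,
`f ∈ C_c^∞(M)` and `k ∈ ℕ`, one has `sup_{p∈M} ∫_{ℝ^l} |Δ_α^k (α_y f)(p)| dy < ∞`. -/
theorem sup_integral_casimir_lt_top
    {E : Type*} [NormedAddCommGroup E] [NormedSpace ℝ E]
    {HM : Type*} [TopologicalSpace HM] (I : ModelWithCorners ℝ E HM)
    {M : Type*} [MetricSpace M] [ChartedSpace HM M] [IsManifold I (⊤ : ℕ∞) M]
    {l : ℕ}
    (α : (Fin l → ℝ) → M → M)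
    (hzero : α 0 = id)
    (haddact : ∀ y z : Fin l → ℝ, α (y + z) = α y ∘ α z)
    (hsmooth : ContMDiff (𝓘(ℝ, Fin l → ℝ).prod I) I (⊤ : ℕ∞)
      (fun q : (Fin l → ℝ) × M => α q.1 q.2))
    (hproper : IsProperMap (fun q : (Fin l → ℝ) × M => (α q.1 q.2, q.2)))
    (hfree : ∀ (y : Fin l → ℝ) (p : M), α y p = p → y = 0)
    (f : M → ℂ)
    (hf : ContMDiff I 𝓘(ℝ, ℂ) (⊤ : ℕ∞) f) (hfc : HasCompactSupport f)
    (k : ℕ) :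
    ∃ C : ℝ, ∀ p : M,
      (∫ y : Fin l → ℝ, ‖(flatLaplacian l)^[k] (fun w => f (α (-w) p)) y‖) ≤ C := by
  classical
  set K : Set M := tsupport f with hK
  have hKc : IsCompact K := hfc
  -- joint smoothness of the orbit map
  have hΨ0 : ContMDiff (𝓘(ℝ, Fin l → ℝ).prod I) 𝓘(ℝ, ℂ) (⊤ : ℕ∞)
      (fun q : (Fin l → ℝ) × M => f (α (-q.1) q.2)) := by
    have h1 : ContMDiff (𝓘(ℝ, Fin l → ℝ).prod I) (𝓘(ℝ, Fin l → ℝ).prod I) (⊤ : ℕ∞)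
        (fun q : (Fin l → ℝ) × M => ((-q.1, q.2) : (Fin l → ℝ) × M)) :=
      (contMDiff_fst.neg).prodMk contMDiff_snd
    exact hf.comp (hsmooth.comp h1)
  -- joint continuity of the iterated Laplacian
  have hΦ : Continuous (fun q : (Fin l → ℝ) × M =>
      (flatLaplacian l)^[k] (fun w => f (α (-w) q.2)) q.1) :=
    (contMDiff_lapParam_iterate k hΨ0).continuous
  -- compact set of relevant translations
  set T : Set ((Fin l → ℝ) × M) :=
    (fun q : (Fin l → ℝ) × M => (α q.1 q.2, q.2)) ⁻¹' (K ×ˢ K) with hT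
  have hTc : IsCompact T := hproper.isCompact_preimage (hKc.prod hKc)
  set L : Set (Fin l → ℝ) := (fun q : (Fin l → ℝ) × M => -q.1) '' T with hL
  have hLc : IsCompact L := hTc.image (continuous_fst.neg)
  have hLmeas : MeasurableSet L := hLc.isClosed.measurableSet
  have hLfin : volume L < ⊤ := hLc.measure_lt_top
  have hLmem : ∀ y : Fin l → ℝ, ∀ p ∈ K, α (-y) p ∈ K → y ∈ L := by
    intro y p hp hy
    exact ⟨(-y, p), ⟨hy, hp⟩, by simp⟩
  -- a bound for the integrand on L ×ˢ K
  obtain ⟨B, hB⟩ := (hLc.prod hKc).exists_bound_of_continuousOn hΦ.continuousOn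
  set B' : ℝ := max B 0 with hB'
  have hB'0 : 0 ≤ B' := le_max_right _ _
  refine ⟨(volume L).toReal * B', ?_⟩
  -- vanishing of the integrand away from the support
  have hvanish : ∀ p : M, ∀ y : Fin l → ℝ, α (-y) p ∉ K →
      (flatLaplacian l)^[k] (fun w => f (α (-w) p)) y = 0 := by
    intro p y hy
    have hcont : Continuous (fun z : Fin l → ℝ => α (-z) p) := by
      have := hsmooth.continuous
      exact this.comp (continuous_neg.prodMk continuous_const)
    have hU : IsOpen {z : Fin l → ℝ | α (-z) p ∉ K} := by
      have hcl : IsClosed {z : Fin l → ℝ | α (-z) p ∈ K} :=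
        (isClosed_tsupport f).preimage hcont
      simpa [Set.compl_setOf] using hcl.isOpen_compl
    exact flatLaplacian_iterate_eqOn_zero k hU
      (fun z hz => image_eq_zero_of_notMem_tsupport hz) y hy
  -- the bound for points in the support
  have key : ∀ p ∈ K,
      (∫ y : Fin l → ℝ, ‖(flatLaplacian l)^[k] (fun w => f (α (-w) p)) y‖)
        ≤ (volume L).toReal * B' := by
    intro p hp
    have hle : ∀ y : Fin l → ℝ,
        ‖(flatLaplacian l)^[k] (fun w => f (α (-w) p)) y‖
          ≤ L.indicator (fun _ => B') y := by
      intro y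
      by_cases hy : y ∈ L
      · rw [Set.indicator_of_mem hy]
        exact le_trans (hB (y, p) ⟨hy, hp⟩) (le_max_left _ _)
      · rw [Set.indicator_of_notMem hy]
        have : α (-y) p ∉ K := fun h => hy (hLmem y p hp h)
        rw [hvanish p y this]
        simp
    have hint : Integrable (L.indicator (fun _ => B')) volume :=
      (integrable_indicator_iff hLmeas).2
        (integrableOn_const hLfin.ne)
    calc (∫ y : Fin l → ℝ, ‖(flatLaplacian l)^[k] (fun w => f (α (-w) p)) y‖)
        ≤ ∫ y : Fin l → ℝ, L.indicator (fun _ => B') y :=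
          integral_mono_of_nonneg (Filter.Eventually.of_forall fun y => norm_nonneg _)
            hint (Filter.Eventually.of_forall hle)
      _ = (volume L).toReal * B' := by
          rw [integral_indicator_const _ hLmeas, smul_eq_mul]
          rfl
  -- general points: translate into the support
  intro p
  by_cases hex : ∃ y : Fin l → ℝ, α (-y) p ∈ K
  · obtain ⟨y₀, hy₀⟩ := hex
    set p' : M := α (-y₀) p with hp'
    have hfun : (fun w => f (α (-w) p)) = fun w => (fun z => f (α (-z) p')) (w - y₀) := by
      funext w
      have h1 : α (-(w - y₀)) p' = α (-w) p := by
        rw [hp', ← Function.comp_apply (f := α (-(w - y₀))) (g := α (-y₀)), ← haddact]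
        have : -(w - y₀) + -y₀ = -w := by abel
        rw [this]
      exact congrArg f h1.symm
    rw [hfun, flatLaplacian_iterate_comp_sub k (fun z => f (α (-z) p')) y₀]
    simp only
    rw [integral_sub_right_eq_self
      (fun y => ‖(flatLaplacian l)^[k] (fun z => f (α (-z) p')) y‖) y₀]
    exact key p' hy₀
  · push_neg at hex
    have hz : ∀ y : Fin l → ℝ,
        (flatLaplacian l)^[k] (fun w => f (α (-w) p)) y = 0 :=
      fun y => hvanish p y (hex y)
    simp only [hz, norm_zero, integral_zero]
    exact mul_nonneg ENNReal.toReal_nonneg hB'0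
end

section
/- For 1 ≤ s ≤ 2 one has the operator inequality 0 ≤ (1+D̸²)^{-ns/2} - (1+|D̸|)^{-ns} ≤ (1+|D̸|)^{-n} ∑_{k=1}^{n} C(n,k) (2|D̸|/(1+D̸²))^k, where C(n,k) are binomial coefficients. -/
/-!
Writing `u = 2|x|/(1+x²) ≥ 0`, one has `(1+|x|)² = (1+x²)(1+u)`, so the difference equals
`(1+|x|)^{-ns} ((1+u)^{ns/2} - 1)`. Since `ns/2 ≤ n` and `-ns ≤ -n`, this is at most
`(1+|x|)^{-n} ((1+u)^n - 1)`, and the binomial theorem expands `(1+u)^n - 1`.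
-/

open Finset

theorem one_add_pow_eq_one_add_sum_Icc {R : Type*} [CommSemiring R] (u : R) (n : ℕ) :
    (1 + u) ^ n = 1 + ∑ k ∈ Icc 1 n, (n.choose k : R) * u ^ k := by
  have hrange : range (n + 1) = insert 0 (Icc 1 n) := by
    ext k
    simp only [mem_range, mem_insert, mem_Icc]
    omega
  rw [add_comm 1 u, add_pow, hrange, sum_insert (by simp)]
  simp [mul_comm]

namespace Real

theorem rpow_neg_div_two_sub_rpow_neg {a b v : ℝ} (ha : 0 < a) (hb : 0 < b)
    (h : b ^ 2 = a * v) (t : ℝ) :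
    a ^ (-t / 2) - b ^ (-t) = b ^ (-t) * (v ^ (t / 2) - 1) := by
  have hv : 0 < v := (pos_iff_pos_of_mul_pos (h ▸ by positivity)).1 ha
  have hb_rpow : b ^ (-t) = a ^ (-t / 2) * v ^ (-t / 2) := by
    rw [← mul_rpow ha.le hv.le, ← h, ← rpow_natCast, ← rpow_mul hb.le]
    ring_nf
  rw [hb_rpow, mul_assoc, mul_sub, ← rpow_add hv, neg_div, neg_add_cancel, rpow_zero]
  ring

end Real

theorem one_add_abs_sq (x : ℝ) :
    (1 + |x|) ^ 2 = (1 + x ^ 2) * (1 + 2 * |x| / (1 + x ^ 2)) := by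
  field_simp
  rw [← sq_abs x]
  ring

theorem resolvent_power_difference_bound_general
    (n : ℕ) (s : ℝ) (hs1 : 1 ≤ s) (hs2 : s ≤ 2) (x : ℝ) :
    0 ≤ (1 + x ^ 2) ^ (-((n : ℝ) * s) / 2) - (1 + |x|) ^ (-((n : ℝ) * s))
    ∧ (1 + x ^ 2) ^ (-((n : ℝ) * s) / 2) - (1 + |x|) ^ (-((n : ℝ) * s))
        ≤ (1 + |x|) ^ (-(n : ℝ)) *
            ∑ k ∈ Finset.Icc 1 n, (n.choose k : ℝ) * (2 * |x| / (1 + x ^ 2)) ^ k := by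
  set u := 2 * |x| / (1 + x ^ 2)
  have hu : 1 ≤ 1 + u := le_add_of_nonneg_right (by positivity)
  have hB : 1 ≤ 1 + |x| := le_add_of_nonneg_right (abs_nonneg x)
  rw [Real.rpow_neg_div_two_sub_rpow_neg (by positivity) (by positivity) (one_add_abs_sq x)]
  have hn : (0 : ℝ) ≤ n := n.cast_nonneg
  have hone : 1 ≤ (1 + u) ^ ((n : ℝ) * s / 2) := Real.one_le_rpow hu (by positivity)
  refine ⟨mul_nonneg (by positivity) (sub_nonneg.2 hone), ?_⟩
  calc (1 + |x|) ^ (-((n : ℝ) * s)) * ((1 + u) ^ ((n : ℝ) * s / 2) - 1)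
      ≤ (1 + |x|) ^ (-(n : ℝ)) * ((1 + u) ^ (n : ℝ) - 1) := by
        gcongr
        · exact le_mul_of_one_le_right hn hs1
        · nlinarith
    _ = (1 + |x|) ^ (-(n : ℝ)) * ∑ k ∈ Icc 1 n, (n.choose k : ℝ) * u ^ k := by
        rw [Real.rpow_natCast, one_add_pow_eq_one_add_sum_Icc, add_sub_cancel_left]

/-- For `1 ≤ s ≤ 2` and `n ≥ 1` one has the (functional-calculus,
hence pointwise in the spectral variable `x`) inequality
`0 ≤ (1+x²)^{-ns/2} - (1+|x|)^{-ns}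
   ≤ (1+|x|)^{-n} ∑_{k=1}^{n} (n choose k) (2|x|/(1+x²))^k`. -/
theorem resolvent_power_difference_bound
    (n : ℕ) (hn : 1 ≤ n) (s : ℝ) (hs1 : 1 ≤ s) (hs2 : s ≤ 2) (x : ℝ) :
    0 ≤ (1 + x ^ 2) ^ (-((n : ℝ) * s) / 2) - (1 + |x|) ^ (-((n : ℝ) * s))
    ∧ (1 + x ^ 2) ^ (-((n : ℝ) * s) / 2) - (1 + |x|) ^ (-((n : ℝ) * s))
        ≤ (1 + |x|) ^ (-(n : ℝ)) *
            ∑ k ∈ Finset.Icc 1 n, (n.choose k : ℝ) * (2 * |x| / (1 + x ^ 2)) ^ k :=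
  resolvent_power_difference_bound_general n s hs1 hs2 x
end
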